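/- arXiv:1704.01535 — 2 statements merged into one kernel-verified Lean document; each statement's English description precedes it below -/
import Mathlib

section
/- For every bandwidth ratio τ > 0, lim_{ε→0} liminf_{k→∞} (1/k)·log₂ β(k,τ,ε) ≥ −θ(τ). -/
open Filter Real

noncomputable section

namespace DHT

/-- Real-valued indicator of a proposition. -/
def ind (P : Prop) : ℝ := by classical exact if P then 1 else 0

/-- `p` is a probability mass function on the finite type `α`. -/
def IsPMF {α : Type*} [Fintype α] (p : α → ℝ) : Prop :=
  (∀ a, 0 ≤ p a) ∧ ∑ a, p a = 1

/-- `f` is a stochastic kernel: every row is a pmf. -/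
def IsKernel {α β : Type*} [Fintype β] (f : α → β → ℝ) : Prop :=
  ∀ a, (∀ b, 0 ≤ f a b) ∧ ∑ b, f a b = 1

/-- Pushforward of a pmf along a map. -/
def pushf {α β : Type*} [Fintype α] (p : α → ℝ) (f : α → β) : β → ℝ :=
  fun b => ∑ a, ind (f a = b) * p a

/-- Probability of a set under a pmf. -/
def probIn {α : Type*} [Fintype α] (p : α → ℝ) (A : Set α) : ℝ :=
  ∑ a, ind (a ∈ A) * p a

/-- Shannon entropy, in bits. -/
def entropy {α : Type*} [Fintype α] (p : α → ℝ) : ℝ :=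
  -∑ a, p a * Real.logb 2 (p a)

/-- Kullback–Leibler divergence, in bits. -/
def klDiv {α : Type*} [Fintype α] (p q : α → ℝ) : ℝ :=
  ∑ a, p a * Real.logb 2 (p a / q a)

/-- Conditional entropy `H(α | β)` of a joint pmf on `α × β`, in bits. -/
def condEntropy {α β : Type*} [Fintype α] [Fintype β] (p : α × β → ℝ) : ℝ :=
  -∑ x : α × β, p x * Real.logb 2 (p x / ∑ a, p (a, x.2))

/-- Mutual information `I(α;β)`, in bits. -/
def mutualInfo {α β : Type*} [Fintype α] [Fintype β] (p : α × β → ℝ) : ℝ :=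
  ∑ x : α × β, p x * Real.logb 2 (p x / ((∑ b, p (x.1, b)) * (∑ a, p (a, x.2))))

/-- Conditional mutual information `I(α;β|γ)`, in bits. -/
def condMI {α β γ : Type*} [Fintype α] [Fintype β] [Fintype γ] (p : α × β × γ → ℝ) : ℝ :=
  ∑ x : α × β × γ, p x * Real.logb 2
    (p x * (∑ a, ∑ b, p (a, b, x.2.2)) /
      ((∑ b, p (x.1, b, x.2.2)) * (∑ a, p (a, x.2.1, x.2.2))))

/-- Markov chain `α − β − γ`: the first and third components are conditionally
independent given the middle one. -/
def MarkovChain {α β γ : Type*} [Fintype α] [Fintype γ] (p : α × β × γ → ℝ) : Prop :=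
  ∀ a b c, p (a, b, c) * (∑ a', ∑ c', p (a', b, c')) =
    (∑ c', p (a, b, c')) * (∑ a', p (a', b, c))

/-- Shannon capacity of a discrete memoryless channel, in bits per use. -/
def capacity {X Y : Type*} [Fintype X] [Fintype Y] (Ch : X → Y → ℝ) : ℝ :=
  sSup {c | ∃ q : X → ℝ, IsPMF q ∧ c = mutualInfo (fun xy : X × Y => q xy.1 * Ch xy.1 xy.2)}

/-- Empirical distribution (type) of a length-`j` sequence. -/
def empDist {α : Type*} [Fintype α] {j : ℕ} (w : Fin j → α) : α → ℝ :=
  fun a => (∑ i, ind (w i = a)) / j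

/-- δ-typicality: the empirical distribution is within δ of `p` in every coordinate. -/
def IsTypical {α : Type*} [Fintype α] (p : α → ℝ) (δ : ℝ) {j : ℕ} (w : Fin j → α) : Prop :=
  ∀ a, |empDist w a - p a| ≤ δ

section System

variable {L : ℕ} {U X Y : Fin L → Type} {V Z : Type}
variable [∀ l, Fintype (U l)] [∀ l, Fintype (X l)] [∀ l, Fintype (Y l)]
variable [Fintype V] [Fintype Z]

/-- Joint pmf of the channel outputs `(Y₁ⁿ,…,Y_Lⁿ)`, `V^k` and `Z^k` induced by `k` i.i.d.
copies of the source `R`, the stochastic encoders `f` and the memoryless channels `Ch`. -/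
def inducedDist (R : (((l : Fin L) → U l) × V × Z) → ℝ)
    (Ch : (l : Fin L) → X l → Y l → ℝ) (k n : ℕ)
    (f : (l : Fin L) → (Fin k → U l) → (Fin n → X l) → ℝ) :
    (((l : Fin L) → Fin n → Y l) × (Fin k → V) × (Fin k → Z)) → ℝ :=
  fun yvz =>
    ∑ u : (l : Fin L) → Fin k → U l, ∑ x : (l : Fin L) → Fin n → X l,
      (∏ i : Fin k, R ((fun l => u l i), yvz.2.1 i, yvz.2.2 i)) *
        ((∏ l, f l (u l) (x l)) * ∏ l, ∏ j : Fin n, Ch l (x l j) (yvz.1 l j))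

/-- `P` and `Q` have the same single-variable marginals. -/
def SameMarginals (P Q : (((l : Fin L) → U l) × V × Z) → ℝ) : Prop :=
  (∀ (l : Fin L) (a : U l),
      (∑ x : ((l : Fin L) → U l) × V × Z, ind (x.1 l = a) * P x) =
        ∑ x : ((l : Fin L) → U l) × V × Z, ind (x.1 l = a) * Q x) ∧
  (∀ v : V, (∑ x : ((l : Fin L) → U l) × V × Z, ind (x.2.1 = v) * P x) =
      ∑ x : ((l : Fin L) → U l) × V × Z, ind (x.2.1 = v) * Q x) ∧
  (∀ z : Z, (∑ x : ((l : Fin L) → U l) × V × Z, ind (x.2.2 = z) * P x) =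
      ∑ x : ((l : Fin L) → U l) × V × Z, ind (x.2.2 = z) * Q x)

/-- Testing against conditional independence: `Q = P_{U_𝓛|Z} P_{V|Z} P_Z`. -/
def IsTACI (P Q : (((l : Fin L) → U l) × V × Z) → ℝ) : Prop :=
  ∀ x : ((l : Fin L) → U l) × V × Z,
    Q x = (∑ v : V, P (x.1, v, x.2.2)) * (∑ u : (l : Fin L) → U l, P (u, x.2.1, x.2.2)) /
      (∑ u : (l : Fin L) → U l, ∑ v : V, P (u, v, x.2.2))

/-- Optimal type-2 error probability `β(k,τ,ε)`. -/
def beta (P Q : (((l : Fin L) → U l) × V × Z) → ℝ)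
    (Ch : (l : Fin L) → X l → Y l → ℝ) (τ ε : ℝ) (k : ℕ) : ℝ :=
  sInf {b | ∃ n : ℕ, (n : ℝ) ≤ τ * k ∧
    ∃ f : (l : Fin L) → (Fin k → U l) → (Fin n → X l) → ℝ,
      (∀ l, IsKernel (f l)) ∧
      ∃ A : Set (((l : Fin L) → Fin n → Y l) × (Fin k → V) × (Fin k → Z)),
        probIn (inducedDist P Ch k n f) Aᶜ ≤ ε ∧
        b = probIn (inducedDist Q Ch k n f) A}

/-- `θ(k,τ)`. -/
def thetaK (P Q : (((l : Fin L) → U l) × V × Z) → ℝ)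
    (Ch : (l : Fin L) → X l → Y l → ℝ) (τ : ℝ) (k : ℕ) : ℝ :=
  sSup {d | ∃ n : ℕ, (n : ℝ) ≤ τ * k ∧
    ∃ f : (l : Fin L) → (Fin k → U l) → (Fin n → X l) → ℝ,
      (∀ l, IsKernel (f l)) ∧
      d = klDiv (inducedDist P Ch k n f) (inducedDist Q Ch k n f) / k}

/-- `θ(τ) = sup_{k ≥ 1} θ(k,τ)`. -/
def theta (P Q : (((l : Fin L) → U l) × V × Z) → ℝ)
    (Ch : (l : Fin L) → X l → Y l → ℝ) (τ : ℝ) : ℝ :=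
  sSup {d | ∃ k : ℕ, 1 ≤ k ∧ d = thetaK P Q Ch τ k}

/-- Optimal type-2 error exponent `κ(τ,ε)`. -/
def kappa (P Q : (((l : Fin L) → U l) × V × Z) → ℝ)
    (Ch : (l : Fin L) → X l → Y l → ℝ) (τ ε : ℝ) : ℝ :=
  sSup {κ : ℝ | 0 ≤ κ ∧ ∀ δ : ℝ, 0 < δ →
    Filter.limsup (fun k : ℕ => Real.logb 2 (beta P Q Ch τ ε k) / k) Filter.atTop ≤ -(κ - δ)}

/-- `I(V^k; Y₁ⁿ,…,Y_Lⁿ | Z^k)` of the induced distribution. -/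
def miVY (P : (((l : Fin L) → U l) × V × Z) → ℝ)
    (Ch : (l : Fin L) → X l → Y l → ℝ) (k n : ℕ)
    (f : (l : Fin L) → (Fin k → U l) → (Fin n → X l) → ℝ) : ℝ :=
  condMI (fun x : (Fin k → V) × ((l : Fin L) → Fin n → Y l) × (Fin k → Z) =>
    inducedDist P Ch k n f (x.2.1, x.1, x.2.2))

/-- `H(V^k | Y₁ⁿ,…,Y_Lⁿ, Z^k)` of the induced distribution. -/
def condEntV (P : (((l : Fin L) → U l) × V × Z) → ℝ)
    (Ch : (l : Fin L) → X l → Y l → ℝ) (k n : ℕ)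
    (f : (l : Fin L) → (Fin k → U l) → (Fin n → X l) → ℝ) : ℝ :=
  condEntropy (fun x : (Fin k → V) × (((l : Fin L) → Fin n → Y l) × (Fin k → Z)) =>
    inducedDist P Ch k n f (x.2.1, x.1, x.2.2))

/-- Probability of correct decoding in the `L`-helper JSCC problem. -/
def probCorrect (P : (((l : Fin L) → U l) × V × Z) → ℝ)
    (Ch : (l : Fin L) → X l → Y l → ℝ) (k n m : ℕ)
    (f : (l : Fin L) → (Fin k → U l) → (Fin n → X l) → ℝ)
    (φ : (Fin k → V) → Fin m)
    (g : Fin m × ((l : Fin L) → Fin n → Y l) × (Fin k → Z) → (Fin k → V)) : ℝ :=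
  ∑ w : ((l : Fin L) → Fin n → Y l) × (Fin k → V) × (Fin k → Z),
    ind (g (φ w.2.1, w.1, w.2.2) = w.2.1) * inducedDist P Ch k n f w

/-- Achievability of rate `R` in the `L`-helper JSCC problem with bandwidth ratio `τ`. -/
def JSCCAchievable (P : (((l : Fin L) → U l) × V × Z) → ℝ)
    (Ch : (l : Fin L) → X l → Y l → ℝ) (τ R : ℝ) : Prop :=
  ∀ lam : ℝ, 0 < lam → lam ≤ 1 →
    ∃ (nseq mseq : ℕ → ℕ) (δ : ℕ → ℝ)
      (f : (k : ℕ) → (l : Fin L) → (Fin k → U l) → (Fin (nseq k) → X l) → ℝ)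
      (φ : (k : ℕ) → (Fin k → V) → Fin (mseq k))
      (g : (k : ℕ) → Fin (mseq k) × ((l : Fin L) → Fin (nseq k) → Y l) × (Fin k → Z) →
        (Fin k → V)),
      (∀ k, 0 ≤ δ k) ∧ Filter.Tendsto δ Filter.atTop (nhds 0) ∧
      ∀ k : ℕ, 1 ≤ k →
        (nseq k : ℝ) ≤ τ * k ∧ 1 ≤ mseq k ∧ (∀ l, IsKernel (f k l)) ∧
        1 - lam ≤ probCorrect P Ch k (nseq k) (mseq k) (f k) (φ k) (g k) ∧
        Real.logb 2 (mseq k) / k ≤ R + δ k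

/-- Optimal rate `R(τ)` of the `L`-helper JSCC problem. -/
def Rjscc (P : (((l : Fin L) → U l) × V × Z) → ℝ)
    (Ch : (l : Fin L) → X l → Y l → ℝ) (τ : ℝ) : ℝ :=
  sInf {R | JSCCAchievable P Ch τ R}

/-- `R_k`: infimum of `H(V^k|Y^n,Z^k)/k` over block lengths `n ≤ τk` and encoders. -/
def Rk (P : (((l : Fin L) → U l) × V × Z) → ℝ)
    (Ch : (l : Fin L) → X l → Y l → ℝ) (τ : ℝ) (k : ℕ) : ℝ :=
  sInf {r | ∃ n : ℕ, (n : ℝ) ≤ τ * k ∧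
    ∃ f : (l : Fin L) → (Fin k → U l) → (Fin n → X l) → ℝ,
      (∀ l, IsKernel (f l)) ∧ r = condEntV P Ch k n f / k}

end System

section SingleObserver

variable {Uu Xx Yy V Z : Type}
variable [Fintype Uu] [Fintype Xx] [Fintype Yy] [Fintype V] [Fintype Z]

/-- Single-observer induced joint pmf of `(Yⁿ, V^k, Z^k)`. -/
def inducedDist1 (R : Uu × V × Z → ℝ) (Ch : Xx → Yy → ℝ) (k n : ℕ)
    (f : (Fin k → Uu) → (Fin n → Xx) → ℝ) :
    ((Fin n → Yy) × (Fin k → V) × (Fin k → Z)) → ℝ :=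
  fun yvz => ∑ u : Fin k → Uu, ∑ x : Fin n → Xx,
    (∏ i : Fin k, R (u i, yvz.2.1 i, yvz.2.2 i)) *
      (f u x * ∏ j : Fin n, Ch (x j) (yvz.1 j))

end SingleObserver

section Aux

variable {Uu V Z Wt : Type} [Fintype Uu] [Fintype V] [Fintype Z] [Fintype Wt]

/-- Markov chain `(Z,V) − U − W` for a joint pmf on `(U × V × Z) × W`. -/
def MarkovZVUW (J : (Uu × V × Z) × Wt → ℝ) : Prop :=
  MarkovChain (fun x : (Z × V) × Uu × Wt => J ((x.2.1, x.1.2, x.1.1), x.2.2))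

/-- `I(U;W|Z)` for a joint pmf on `(U × V × Z) × W`. -/
def miUW_Z (J : (Uu × V × Z) × Wt → ℝ) : ℝ :=
  condMI (fun x : Uu × Wt × Z => ∑ v, J ((x.1, v, x.2.2), x.2.1))

/-- `I(V;W|Z)` for a joint pmf on `(U × V × Z) × W`. -/
def miVW_Z (J : (Uu × V × Z) × Wt → ℝ) : ℝ :=
  condMI (fun x : V × Wt × Z => ∑ u, J ((u, x.1, x.2.2), x.2.1))

/-- `I(U;W|V,Z)` for a joint pmf on `(U × V × Z) × W`. -/
def miUW_VZ (J : (Uu × V × Z) × Wt → ℝ) : ℝ :=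
  condMI (fun x : Uu × Wt × (V × Z) => J ((x.1, x.2.2.1, x.2.2.2), x.2.1))

/-- `H(V|W,Z)` for a joint pmf on `(U × V × Z) × W`. -/
def entV_WZ (J : (Uu × V × Z) × Wt → ℝ) : ℝ :=
  condEntropy (fun x : V × (Wt × Z) => ∑ u, J ((u, x.1, x.2.2), x.2.1))

/-- `H(V|Z)` for a joint pmf on `U × V × Z`. -/
def entV_Z (P : Uu × V × Z → ℝ) : ℝ :=
  condEntropy (fun x : V × Z => ∑ u, P (u, x.1, x.2))

end Aux

end DHT

/-!
For pmfs `p ≪ q` and a region `A` with `p(Aᶜ) ≤ ε < 1`, summing `p log (p / q) ≥ p log t + p - t q`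
(that is, `log x ≥ 1 - 1 / x`) with `t = 1 / q(A)` on `A` and `t = 1` off `A` gives
`p(A) log (1 / q(A)) ≤ D(p ‖ q) + 1 / ln 2`. Applied to the output distributions of any admissible
scheme, whose divergence is at most `k θ(τ)`, this yields
`log β(k,τ,ε) / k ≥ -(θ(τ) + 1 / (k ln 2)) / (1 - ε)`; `θ(τ)` is finite because `Q > 0` bounds the
likelihood ratio `P / Q`. The liminf over `k` is nonpositive and antitone in `ε`, so it has a limit
as `ε → 0⁺`, and that limit is at least `lim -θ(τ) / (1 - ε) = -θ(τ)`.
-/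

namespace DHT

open Finset Topology

section Divergence

variable {α : Type*} [Fintype α]

lemma ind_nonneg (P : Prop) : 0 ≤ ind P := by
  unfold ind; split <;> norm_num

lemma probIn_nonneg {p : α → ℝ} (hp : ∀ a, 0 ≤ p a) (A : Set α) : 0 ≤ probIn p A :=
  sum_nonneg fun a _ => mul_nonneg (ind_nonneg _) (hp a)

lemma probIn_eq_sum_filter (p : α → ℝ) (A : Set α) [DecidablePred (· ∈ A)] :
    probIn p A = ∑ a ∈ univ.filter (· ∈ A), p a := by
  rw [sum_filter]
  refine sum_congr rfl fun a _ => ?_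
  by_cases h : a ∈ A <;> simp [ind, h]

lemma probIn_empty (p : α → ℝ) : probIn p ∅ = 0 := by
  simp [probIn, ind]

lemma probIn_univ (p : α → ℝ) : probIn p Set.univ = ∑ a, p a := by
  simp [probIn, ind]

lemma probIn_add_probIn_compl (p : α → ℝ) (A : Set α) :
    probIn p A + probIn p Aᶜ = ∑ a, p a := by
  classical
  rw [probIn_eq_sum_filter, probIn_eq_sum_filter]
  exact sum_filter_add_sum_filter_not _ _ _

lemma probIn_eq_zero_of_absolutelyContinuous {p q : α → ℝ} (hq : ∀ a, 0 ≤ q a)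
    (hpq : ∀ a, q a = 0 → p a = 0) {A : Set α} (hA : probIn q A = 0) : probIn p A = 0 := by
  refine sum_eq_zero fun a _ => ?_
  have := (sum_eq_zero_iff_of_nonneg fun a _ => mul_nonneg (ind_nonneg _) (hq a)).1 hA a
    (mem_univ a)
  rcases mul_eq_zero.1 this with h | h
  · rw [h, zero_mul]
  · rw [hpq a h, mul_zero]

lemma mul_logb_add_le_mul_logb_div {p q t : ℝ} (hp : 0 ≤ p) (hq : 0 ≤ q)
    (hpq : q = 0 → p = 0) (ht : 0 < t) :
    p * logb 2 t + (p - t * q) / log 2 ≤ p * logb 2 (p / q) := by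
  have hlog2 : 0 < log 2 := log_pos one_lt_two
  rcases hp.eq_or_lt with rfl | hp
  · simp only [zero_mul, zero_sub, zero_add]
    exact div_nonpos_of_nonpos_of_nonneg (neg_nonpos.2 (mul_nonneg ht.le hq)) hlog2.le
  have hq : 0 < q := hq.lt_of_ne fun h => hp.ne' (hpq h.symm)
  have key := one_sub_inv_le_log_of_pos (show 0 < p / (t * q) by positivity)
  rw [inv_div, log_div hp.ne' (by positivity), log_mul ht.ne' hq.ne'] at key
  have hnats : p * log t + (p - t * q) ≤ p * log (p / q) := by
    rw [log_div hp.ne' hq.ne']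
    have := mul_le_mul_of_nonneg_left key hp.le
    rw [mul_sub, mul_one, mul_div_cancel₀ _ hp.ne'] at this
    linarith
  calc p * logb 2 t + (p - t * q) / log 2 = (p * log t + (p - t * q)) / log 2 := by
        rw [logb]; ring
    _ ≤ p * log (p / q) / log 2 := div_le_div_of_nonneg_right hnats hlog2.le
    _ = p * logb 2 (p / q) := by rw [logb, mul_div_assoc]

lemma sum_mul_logb_add_le_sum_mul_logb_div {ι : Type*} (s : Finset ι) {p q : ι → ℝ}
    (hp : ∀ a, 0 ≤ p a) (hq : ∀ a, 0 ≤ q a) (hpq : ∀ a, q a = 0 → p a = 0) {t : ℝ} (ht : 0 < t) :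
    (∑ a ∈ s, p a) * logb 2 t + ((∑ a ∈ s, p a) - t * ∑ a ∈ s, q a) / log 2 ≤
      ∑ a ∈ s, p a * logb 2 (p a / q a) := by
  calc _ = ∑ a ∈ s, (p a * logb 2 t + (p a - t * q a) / log 2) := by
        rw [sum_add_distrib, ← sum_mul, ← sum_div, sum_sub_distrib, mul_sum]
    _ ≤ _ := sum_le_sum fun a _ => mul_logb_add_le_mul_logb_div (hp a) (hq a) (hpq a) ht

lemma probIn_mul_neg_logb_le_klDiv {p q : α → ℝ} (hp : IsPMF p) (hq : IsPMF q)
    (hpq : ∀ a, q a = 0 → p a = 0) {A : Set α} (hqA : 0 < probIn q A) :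
    probIn p A * -logb 2 (probIn q A) ≤ klDiv p q + 1 / log 2 := by
  classical
  have hin := sum_mul_logb_add_le_sum_mul_logb_div (univ.filter (· ∈ A)) hp.1 hq.1 hpq
    (inv_pos.2 hqA)
  have hout := sum_mul_logb_add_le_sum_mul_logb_div (univ.filter (· ∈ Aᶜ)) hp.1 hq.1 hpq one_pos
  rw [← probIn_eq_sum_filter, ← probIn_eq_sum_filter, logb_inv, inv_mul_cancel₀ hqA.ne'] at hin
  rw [← probIn_eq_sum_filter, ← probIn_eq_sum_filter, logb_one, mul_zero, zero_add,
    one_mul] at hout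
  have hsplit : klDiv p q = ∑ a ∈ univ.filter (· ∈ A), p a * logb 2 (p a / q a) +
      ∑ a ∈ univ.filter (· ∈ Aᶜ), p a * logb 2 (p a / q a) :=
    (sum_filter_add_sum_filter_not _ _ _).symm
  have hpSum := probIn_add_probIn_compl p A
  have hqSum := probIn_add_probIn_compl q A
  rw [hp.2] at hpSum
  rw [hq.2] at hqSum
  have hrest : -(1 / log 2) ≤ (probIn p A - 1) / log 2 + (probIn p Aᶜ - probIn q Aᶜ) / log 2 := by
    rw [← add_div, ← neg_div]
    exact div_le_div_of_nonneg_right (by linarith [probIn_nonneg hq.1 A]) (log_pos one_lt_two).le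
  linarith

lemma neg_klDiv_div_le_logb_probIn {p q : α → ℝ} (hp : IsPMF p) (hq : IsPMF q)
    (hpq : ∀ a, q a = 0 → p a = 0) {A : Set α} {ε : ℝ} (hε : ε < 1) (hA : probIn p Aᶜ ≤ ε) :
    0 < probIn q A ∧ -(klDiv p q + 1 / log 2) / (1 - ε) ≤ logb 2 (probIn q A) := by
  have hpA : 1 - ε ≤ probIn p A := by linarith [probIn_add_probIn_compl p A, hp.2]
  have hqA : 0 < probIn q A := by
    refine (probIn_nonneg hq.1 A).lt_of_ne fun h => ?_
    linarith [probIn_eq_zero_of_absolutelyContinuous hq.1 hpq h.symm]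
  have hqA1 : probIn q A ≤ 1 := by
    linarith [probIn_add_probIn_compl q A, hq.2, probIn_nonneg hq.1 Aᶜ]
  have hlog : 0 ≤ -logb 2 (probIn q A) := neg_nonneg.2 (logb_nonpos one_lt_two hqA.le hqA1)
  refine ⟨hqA, ?_⟩
  rw [neg_div, neg_le, le_div_iff₀ (by linarith)]
  nlinarith [probIn_mul_neg_logb_le_klDiv hp hq hpq hqA]

lemma klDiv_le_logb_of_le_mul {p q : α → ℝ} {C : ℝ} (hp : IsPMF p) (hq : ∀ a, 0 ≤ q a)
    (hpq : ∀ a, p a ≤ C * q a) : klDiv p q ≤ logb 2 C := by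
  calc klDiv p q ≤ ∑ a, p a * logb 2 C := sum_le_sum fun a _ => ?_
    _ = logb 2 C := by rw [← sum_mul, hp.2, one_mul]
  rcases (hp.1 a).eq_or_lt with h | h
  · rw [← h, zero_mul, zero_mul]
  have hqa : 0 < q a := (hq a).lt_of_ne fun h' => by linarith [hpq a, h'.symm ▸ mul_zero C]
  exact mul_le_mul_of_nonneg_left (logb_le_logb_of_le one_lt_two (div_pos h hqa)
    ((div_le_iff₀ hqa).2 (hpq a))) h.le

lemma exists_le_mul_of_pos (p : α → ℝ) {q : α → ℝ} (hq : ∀ a, 0 < q a) :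
    ∃ M, ∀ a, p a ≤ M * q a := by
  obtain ⟨M, hM⟩ := (Set.finite_range fun a => p a / q a).bddAbove
  exact ⟨M, fun a => (div_le_iff₀ (hq a)).1 (hM ⟨a, rfl⟩)⟩

end Divergence

section Kernel

lemma IsKernel.pi {ι : Type*} [Fintype ι] [DecidableEq ι] {α β : ι → Type*} [∀ i, Fintype (β i)]
    {K : ∀ i, α i → β i → ℝ} (hK : ∀ i, IsKernel (K i)) :
    IsKernel (fun (a : ∀ i, α i) (b : ∀ i, β i) => ∏ i, K i (a i) (b i)) := by
  intro a
  refine ⟨fun b => prod_nonneg fun i _ => (hK i (a i)).1 _, ?_⟩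
  rw [← Fintype.prod_sum]
  exact prod_eq_one fun i _ => (hK i (a i)).2

lemma isKernel_one_of_fin_zero (α β : Type*) [Fintype β] :
    IsKernel (fun (_ : α) (_ : Fin 0 → β) => (1 : ℝ)) :=
  fun _ => ⟨fun _ => zero_le_one, by simp⟩

lemma sum_sum_sum_mul_mul_of_isKernel {A B C D : Type*}
    [Fintype A] [Fintype B] [Fintype C] [Fintype D] (F : A → D → ℝ) {G : A → B → ℝ} {H : B → C → ℝ} (hG : IsKernel G) (hH : IsKernel H) :
    ∑ w : C × D, ∑ a, ∑ b, F a w.2 * (G a b * H b w.1) = ∑ a, ∑ d, F a d := by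
  have hinner : ∀ a d, ∑ c, ∑ b, F a d * (G a b * H b c) = F a d := fun a d => by
    rw [sum_comm]
    simp_rw [← mul_sum, (hH _).2, mul_one, (hG a).2, mul_one]
  calc _ = ∑ d, ∑ a, ∑ c, ∑ b, F a d * (G a b * H b c) := by
        rw [Fintype.sum_prod_type, sum_comm]
        exact sum_congr rfl fun d _ => sum_comm
    _ = ∑ d, ∑ a, F a d := by simp only [hinner]
    _ = _ := sum_comm

lemma sum_sum_prod_eq_sum_pow {ι : Type*} [Fintype ι] [DecidableEq ι] {T : ι → Type*}
    [∀ i, Fintype (T i)] {V Z : Type*} [Fintype V] [Fintype Z] (R : ((i : ι) → T i) × V × Z → ℝ) (k : ℕ) :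
    ∑ u : (i : ι) → Fin k → T i, ∑ d : (Fin k → V) × (Fin k → Z),
      ∏ j, R ((fun i => u i j), d.1 j, d.2 j) = (∑ s, R s) ^ k := by
  let e : (Fin k → ((i : ι) → T i) × V × Z) ≃
      ((i : ι) → Fin k → T i) × (Fin k → V) × (Fin k → Z) :=
    (Equiv.arrowProdEquivProdArrow _ _ _).trans
      (Equiv.prodCongr (Equiv.piComm _) (Equiv.arrowProdEquivProdArrow _ _ _))
  rw [Fintype.sum_pow, ← Fintype.sum_prod_type']
  exact (Fintype.sum_equiv e _ _ fun _ => rfl).symm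

end Kernel

section Liminf

lemma tendsto_neg_add_div_div_one_sub (θ C ε : ℝ) :
    Tendsto (fun k : ℕ => -(θ + C / k) / (1 - ε)) atTop (𝓝 (-θ / (1 - ε))) := by
  simpa using ((tendsto_const_div_atTop_nhds_zero_nat C).const_add θ).neg.div_const (1 - ε)

variable {a : ℝ → ℕ → ℝ} {θ C : ℝ}

lemma neg_div_one_sub_le_liminf {ε : ℝ} (hle : ∀ᶠ k in atTop, a ε k ≤ 0)
    (hge : ∀ᶠ k in atTop, -(θ + C / k) / (1 - ε) ≤ a ε k) :
    -θ / (1 - ε) ≤ liminf (a ε) atTop := by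
  have hlim := tendsto_neg_add_div_div_one_sub θ C ε
  rw [← hlim.liminf_eq]
  exact liminf_le_liminf hge hlim.isBoundedUnder_ge (isCoboundedUnder_ge_of_eventually_le _ hle)

lemma exists_tendsto_liminf_ge
    (hanti : ∀ᶠ k in atTop, AntitoneOn (fun ε => a ε k) (Set.Ioo 0 1))
    (hle : ∀ ε ∈ Set.Ioo (0 : ℝ) 1, ∀ᶠ k in atTop, a ε k ≤ 0)
    (hge : ∀ ε ∈ Set.Ioo (0 : ℝ) 1, ∀ᶠ k in atTop, -(θ + C / k) / (1 - ε) ≤ a ε k) :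
    ∃ c, Tendsto (fun ε => liminf (a ε) atTop) (𝓝[>] 0) (𝓝 c) ∧ -θ ≤ c := by
  have hbdd : ∀ ε ∈ Set.Ioo (0 : ℝ) 1, IsBoundedUnder (· ≥ ·) atTop (a ε) :=
    fun ε hε => (tendsto_neg_add_div_div_one_sub θ C ε).isBoundedUnder_ge.mono_ge (hge ε hε)
  have hcobdd : ∀ ε ∈ Set.Ioo (0 : ℝ) 1, IsCoboundedUnder (· ≥ ·) atTop (a ε) :=
    fun ε hε => isCoboundedUnder_ge_of_eventually_le _ (hle ε hε)
  have hmono : AntitoneOn (fun ε => liminf (a ε) atTop) (Set.Ioo 0 1) :=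
    fun ε₁ hε₁ ε₂ hε₂ h => liminf_le_liminf (hanti.mono fun k hk => hk hε₁ hε₂ h)
      (hbdd ε₂ hε₂) (hcobdd ε₁ hε₁)
  have hnonpos : ∀ ε ∈ Set.Ioo (0 : ℝ) 1, liminf (a ε) atTop ≤ 0 :=
    fun ε hε => liminf_le_of_frequently_le (hle ε hε).frequently (hbdd ε hε)
  have hlim := hmono.tendsto_nhdsWithin_Ioo_right ⟨1 / 2, by norm_num⟩
    ⟨0, by rintro _ ⟨ε, hε, rfl⟩; exact hnonpos ε hε⟩
  have hbound : Tendsto (fun ε : ℝ => -θ / (1 - ε)) (𝓝[>] 0) (𝓝 (-θ)) := by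
    have : ContinuousAt (fun ε : ℝ => -θ / (1 - ε)) 0 := by fun_prop (disch := norm_num)
    simpa using this.tendsto.mono_left nhdsWithin_le_nhds
  refine ⟨_, hlim, le_of_tendsto_of_tendsto hbound hlim ?_⟩
  filter_upwards [Ioo_mem_nhdsGT one_pos] with ε hε
  exact neg_div_one_sub_le_liminf (hle ε hε) (hge ε hε)

end Liminf

section System

variable {L : ℕ} {U X Y : Fin L → Type} {V Z : Type}
variable [∀ l, Fintype (U l)] [∀ l, Fintype (X l)] [∀ l, Fintype (Y l)]
variable {P Q : (((l : Fin L) → U l) × V × Z) → ℝ} {Ch : (l : Fin L) → X l → Y l → ℝ}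

lemma inducedDist_le_pow_mul {M : ℝ} (hPQ : ∀ s, P s ≤ M * Q s) (hP : ∀ s, 0 ≤ P s)
    (hCh : ∀ l, IsKernel (Ch l)) {k n : ℕ}
    {f : (l : Fin L) → (Fin k → U l) → (Fin n → X l) → ℝ} (hf : ∀ l, IsKernel (f l)) (w) :
    inducedDist P Ch k n f w ≤ M ^ k * inducedDist Q Ch k n f w := by
  simp only [inducedDist, mul_sum]
  refine sum_le_sum fun u _ => sum_le_sum fun x _ => ?_
  rw [← mul_assoc (M ^ k)]
  refine mul_le_mul_of_nonneg_right ?_ (mul_nonneg ((IsKernel.pi hf u).1 x)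
    ((IsKernel.pi (fun l => IsKernel.pi fun _ : Fin n => hCh l) x).1 w.1))
  calc _ ≤ ∏ i : Fin k, M * Q ((fun l => u l i), w.2.1 i, w.2.2 i) :=
        prod_le_prod (fun _ _ => hP _) fun _ _ => hPQ _
    _ = _ := by rw [prod_mul_distrib, prod_const, card_univ, Fintype.card_fin]

variable [Fintype V] [Fintype Z]

lemma isPMF_inducedDist (hP : IsPMF P) (hCh : ∀ l, IsKernel (Ch l)) {k n : ℕ}
    {f : (l : Fin L) → (Fin k → U l) → (Fin n → X l) → ℝ} (hf : ∀ l, IsKernel (f l)) :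
    IsPMF (inducedDist P Ch k n f) := by
  have hF := IsKernel.pi hf
  have hC := IsKernel.pi fun l => IsKernel.pi fun _ : Fin n => hCh l
  refine ⟨fun w => sum_nonneg fun u _ => sum_nonneg fun x _ => mul_nonneg
    (prod_nonneg fun i _ => hP.1 _) (mul_nonneg ((hF u).1 x) ((hC x).1 w.1)), ?_⟩
  have h := sum_sum_sum_mul_mul_of_isKernel (fun u (d : (Fin k → V) × (Fin k → Z)) =>
    ∏ i, P ((fun l => u l i), d.1 i, d.2 i)) hF hC
  rw [sum_sum_prod_eq_sum_pow, hP.2, one_pow] at h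
  exact h

lemma exists_klDiv_inducedDist_le_mul (hP : IsPMF P) (hQ : IsPMF Q) (hQpos : ∀ s, 0 < Q s)
    (hCh : ∀ l, IsKernel (Ch l)) :
    ∃ D, ∀ k n (f : (l : Fin L) → (Fin k → U l) → (Fin n → X l) → ℝ), (∀ l, IsKernel (f l)) →
      klDiv (inducedDist P Ch k n f) (inducedDist Q Ch k n f) ≤ k * D := by
  obtain ⟨M, hM⟩ := exists_le_mul_of_pos P hQpos
  refine ⟨logb 2 M, fun k n f hf => ?_⟩
  rw [← logb_pow]
  exact klDiv_le_logb_of_le_mul (isPMF_inducedDist hP hCh hf) (isPMF_inducedDist hQ hCh hf).1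
    (inducedDist_le_pow_mul hM hP.1 hCh hf)

lemma inducedDist_absolutelyContinuous (hP : IsPMF P) (hQpos : ∀ s, 0 < Q s)
    (hCh : ∀ l, IsKernel (Ch l)) {k n : ℕ}
    {f : (l : Fin L) → (Fin k → U l) → (Fin n → X l) → ℝ} (hf : ∀ l, IsKernel (f l)) (w)
    (hw : inducedDist Q Ch k n f w = 0) : inducedDist P Ch k n f w = 0 := by
  obtain ⟨M, hM⟩ := exists_le_mul_of_pos P hQpos
  have := inducedDist_le_pow_mul hM hP.1 hCh hf w
  rw [hw, mul_zero] at this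
  exact this.antisymm ((isPMF_inducedDist hP hCh hf).1 w)

variable {τ : ℝ}

lemma klDiv_inducedDist_le_mul_theta (hP : IsPMF P) (hQ : IsPMF Q) (hQpos : ∀ s, 0 < Q s)
    (hCh : ∀ l, IsKernel (Ch l)) (hτ : 0 ≤ τ) {k n : ℕ} (hk : 1 ≤ k) (hn : (n : ℝ) ≤ τ * k)
    {f : (l : Fin L) → (Fin k → U l) → (Fin n → X l) → ℝ} (hf : ∀ l, IsKernel (f l)) :
    klDiv (inducedDist P Ch k n f) (inducedDist Q Ch k n f) ≤ k * theta P Q Ch τ := by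
  obtain ⟨D, hD⟩ := exists_klDiv_inducedDist_le_mul hP hQ hQpos hCh
  have hdiv : ∀ k : ℕ, 1 ≤ k → ∀ n (f : (l : Fin L) → (Fin k → U l) → (Fin n → X l) → ℝ),
      (∀ l, IsKernel (f l)) → klDiv (inducedDist P Ch k n f) (inducedDist Q Ch k n f) / k ≤ D :=
    fun k hk n f hf => (div_le_iff₀ (by positivity)).2 (by linarith [hD k n f hf])
  have hthetaK : ∀ k : ℕ, 1 ≤ k → thetaK P Q Ch τ k ≤ D := fun k hk =>
    csSup_le ⟨_, 0, by rw [Nat.cast_zero]; positivity, _,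
      fun l => isKernel_one_of_fin_zero (Fin k → U l) (X l), rfl⟩
      (by rintro _ ⟨n, -, f, hf, rfl⟩; exact hdiv k hk n f hf)
  have hk_le : klDiv (inducedDist P Ch k n f) (inducedDist Q Ch k n f) / k ≤ thetaK P Q Ch τ k :=
    le_csSup ⟨D, by rintro _ ⟨n, -, f, hf, rfl⟩; exact hdiv k hk n f hf⟩ ⟨n, hn, f, hf, rfl⟩
  have hle_theta : thetaK P Q Ch τ k ≤ theta P Q Ch τ :=
    le_csSup ⟨D, by rintro _ ⟨k, hk, rfl⟩; exact hthetaK k hk⟩ ⟨k, hk, rfl⟩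
  rw [mul_comm]
  exact (div_le_iff₀ (by positivity)).1 (hk_le.trans hle_theta)

variable {ε : ℝ} {k : ℕ}

lemma beta_le_probIn (hQ : IsPMF Q) (hCh : ∀ l, IsKernel (Ch l)) {n : ℕ} (hn : (n : ℝ) ≤ τ * k)
    {f : (l : Fin L) → (Fin k → U l) → (Fin n → X l) → ℝ} (hf : ∀ l, IsKernel (f l))
    (A : Set (((l : Fin L) → Fin n → Y l) × (Fin k → V) × (Fin k → Z)))
    (hA : probIn (inducedDist P Ch k n f) Aᶜ ≤ ε) :
    beta P Q Ch τ ε k ≤ probIn (inducedDist Q Ch k n f) A :=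
  csInf_le ⟨0, by
    rintro _ ⟨n, -, f, hf, A, -, rfl⟩; exact probIn_nonneg (isPMF_inducedDist hQ hCh hf).1 A⟩
    ⟨n, hn, f, hf, A, hA, rfl⟩

lemma le_beta (hτ : 0 ≤ τ) (hε : 0 ≤ ε) {b : ℝ}
    (h : ∀ n : ℕ, (n : ℝ) ≤ τ * k → ∀ f : (l : Fin L) → (Fin k → U l) → (Fin n → X l) → ℝ,
      (∀ l, IsKernel (f l)) → ∀ A, probIn (inducedDist P Ch k n f) Aᶜ ≤ ε →
        b ≤ probIn (inducedDist Q Ch k n f) A) :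
    b ≤ beta P Q Ch τ ε k :=
  le_csInf ⟨_, 0, by rw [Nat.cast_zero]; positivity, _,
      fun l => isKernel_one_of_fin_zero (Fin k → U l) (X l), Set.univ,
      by rwa [Set.compl_univ, probIn_empty], rfl⟩
    (by rintro _ ⟨n, hn, f, hf, A, hA, rfl⟩; exact h n hn f hf A hA)

lemma beta_le_one (hQ : IsPMF Q) (hCh : ∀ l, IsKernel (Ch l)) (hτ : 0 ≤ τ) (hε : 0 ≤ ε) :
    beta P Q Ch τ ε k ≤ 1 := by
  have hf := fun l => isKernel_one_of_fin_zero (Fin k → U l) (X l)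
  calc beta P Q Ch τ ε k ≤ probIn (inducedDist Q Ch k 0 fun _ _ _ => 1) Set.univ :=
        beta_le_probIn hQ hCh (by rw [Nat.cast_zero]; positivity) hf Set.univ
          (by rwa [Set.compl_univ, probIn_empty])
    _ = 1 := by rw [probIn_univ, (isPMF_inducedDist hQ hCh hf).2]

lemma beta_le_beta (hQ : IsPMF Q) (hCh : ∀ l, IsKernel (Ch l)) (hτ : 0 ≤ τ) {ε' : ℝ}
    (hε : 0 ≤ ε) (hεε' : ε ≤ ε') : beta P Q Ch τ ε' k ≤ beta P Q Ch τ ε k :=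
  le_beta hτ hε fun _ hn _ hf A hA => beta_le_probIn hQ hCh hn hf A (hA.trans hεε')

lemma rpow_le_beta (hP : IsPMF P) (hQ : IsPMF Q) (hQpos : ∀ s, 0 < Q s)
    (hCh : ∀ l, IsKernel (Ch l)) (hτ : 0 ≤ τ) (hε : ε ∈ Set.Ioo 0 1) (hk : 1 ≤ k) :
    (2 : ℝ) ^ (-(k * theta P Q Ch τ + 1 / log 2) / (1 - ε)) ≤ beta P Q Ch τ ε k := by
  refine le_beta hτ hε.1.le fun n hn f hf A hA => ?_
  obtain ⟨hpos, hlog⟩ := neg_klDiv_div_le_logb_probIn (isPMF_inducedDist hP hCh hf)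
    (isPMF_inducedDist hQ hCh hf) (inducedDist_absolutelyContinuous hP hQpos hCh hf) hε.2 hA
  have hD := klDiv_inducedDist_le_mul_theta hP hQ hQpos hCh hτ hk hn hf
  calc _ ≤ (2 : ℝ) ^ logb 2 (probIn (inducedDist Q Ch k n f) A) :=
        rpow_le_rpow_of_exponent_le one_le_two (le_trans (div_le_div_of_nonneg_right
          (by linarith) (by linarith [hε.2])) hlog)
    _ = _ := rpow_logb two_pos (by norm_num) hpos

lemma beta_pos (hP : IsPMF P) (hQ : IsPMF Q) (hQpos : ∀ s, 0 < Q s)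
    (hCh : ∀ l, IsKernel (Ch l)) (hτ : 0 ≤ τ) (hε : ε ∈ Set.Ioo 0 1) (hk : 1 ≤ k) :
    0 < beta P Q Ch τ ε k :=
  (rpow_pos_of_pos two_pos _).trans_le (rpow_le_beta hP hQ hQpos hCh hτ hε hk)

end System

end DHT

open DHT Filter Real

theorem statement_1_general {L : ℕ} {U X Y : Fin L → Type} {V Z : Type}
    [∀ l, Fintype (U l)] [∀ l, Fintype (X l)] [∀ l, Fintype (Y l)]
    [Fintype V] [Fintype Z]
    (P Q : (((l : Fin L) → U l) × V × Z) → ℝ)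
    (hP : IsPMF P) (hQ : IsPMF Q) (hQpos : ∀ x, 0 < Q x)
    (Ch : (l : Fin L) → X l → Y l → ℝ) (hCh : ∀ l, IsKernel (Ch l))
    (τ : ℝ) (hτ : 0 < τ) :
    ∃ c : ℝ,
      Filter.Tendsto
        (fun ε : ℝ =>
          Filter.liminf (fun k : ℕ => Real.logb 2 (beta P Q Ch τ ε k) / k) Filter.atTop)
        (nhdsWithin 0 (Set.Ioi 0)) (nhds c) ∧
      - theta P Q Ch τ ≤ c := by
  have hpos := fun {ε} (hε : ε ∈ Set.Ioo (0 : ℝ) 1) {k} (hk : 1 ≤ k) =>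
    beta_pos hP hQ hQpos hCh hτ.le hε hk
  refine exists_tendsto_liminf_ge (C := 1 / log 2) ?_ (fun ε hε => ?_) (fun ε hε => ?_)
  · filter_upwards [eventually_ge_atTop 1] with k hk ε₁ hε₁ ε₂ hε₂ hε
    exact div_le_div_of_nonneg_right (logb_le_logb_of_le one_lt_two (hpos hε₂ hk)
      (beta_le_beta hQ hCh hτ.le hε₁.1.le hε)) k.cast_nonneg
  · filter_upwards [eventually_ge_atTop 1] with k hk
    exact div_nonpos_of_nonpos_of_nonneg (logb_nonpos one_lt_two (hpos hε hk).le
      (beta_le_one hQ hCh hτ.le hε.1.le)) k.cast_nonneg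
  · filter_upwards [eventually_ge_atTop 1] with k hk
    have hlog := (le_logb_iff_rpow_le one_lt_two (hpos hε hk)).2
      (rpow_le_beta hP hQ hQpos hCh hτ.le hε hk)
    calc -(theta P Q Ch τ + 1 / log 2 / k) / (1 - ε)
        = -(k * theta P Q Ch τ + 1 / log 2) / (1 - ε) / k := by
          field_simp
      _ ≤ _ := div_le_div_of_nonneg_right hlog k.cast_nonneg

/-- For every bandwidth ratio `τ > 0`,
`lim_{ε→0} liminf_{k→∞} (1/k)·log₂ β(k,τ,ε) ≥ −θ(τ)` (the limit as `ε → 0⁺` exists and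
is at least `−θ(τ)`). -/
theorem statement_1 {L : ℕ} {U X Y : Fin L → Type} {V Z : Type}
    [∀ l, Fintype (U l)] [∀ l, Fintype (X l)] [∀ l, Fintype (Y l)]
    [Fintype V] [Fintype Z]
    (P Q : (((l : Fin L) → U l) × V × Z) → ℝ)
    (hP : IsPMF P) (hQ : IsPMF Q) (hmarg : SameMarginals P Q) (hQpos : ∀ x, 0 < Q x)
    (Ch : (l : Fin L) → X l → Y l → ℝ) (hCh : ∀ l, IsKernel (Ch l))
    (τ : ℝ) (hτ : 0 < τ) :
    ∃ c : ℝ,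
      Filter.Tendsto
        (fun ε : ℝ =>
          Filter.liminf (fun k : ℕ => Real.logb 2 (beta P Q Ch τ ε k) / k) Filter.atTop)
        (nhdsWithin 0 (Set.Ioi 0)) (nhds c) ∧
      - theta P Q Ch τ ≤ c :=
  statement_1_general P Q hP hQ hQpos Ch hCh τ hτ
end
end

section
/- Let (U,V,Z,W) be random variables on finite sets such that (Z,V)−U−W is a Markov chain, and let c ≥ 0 satisfy I(U;W|Z) > c. Then there exists a finite random variable W̄, jointly distributed with (U,V,Z), such that (Z,V)−U−W̄ is a Markov chain, I(U;W̄|Z) = c, and H(V|W̄,Z) ≤ H(V|W,Z) + I(U;W|Z) − c. -/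
open Filter Real

noncomputable section

open DHT Filter Real

/-!
Time sharing. With `λ = c / I(U;W|Z) ∈ [0,1)`, let `W̄` be `W` with probability `λ` and an
erasure symbol otherwise, independently of everything else. The erasure keeps
`(Z,V) − U − W̄` and carries no information, so `I(U;W̄|Z) = λ I(U;W|Z) = c` and
`H(V|W̄,Z) = λ H(V|W,Z) + (1 − λ) H(V|Z)`. The bound then follows from
`H(V|Z) ≤ H(V|W,Z) + I(U;W|Z)`, i.e. `I(V;W|Z) ≤ I(U;W|Z)`: under the Markov chain,
`I(U;W|Z) − I(V;W|Z) = I(U;W|V,Z) = D(P_{UVZW} ‖ P_{UVZ} P_{W|VZ}) ≥ 0`.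
-/

namespace DHT

theorem klDiv_nonneg {ι : Type*} [Fintype ι] {p q : ι → ℝ} (hp : ∀ i, 0 ≤ p i)
    (hq : ∀ i, 0 ≤ q i) (hmass : ∑ i, q i ≤ ∑ i, p i) (hsupp : ∀ i, p i ≠ 0 → q i ≠ 0) :
    0 ≤ klDiv p q := by
  have hlog2 : 0 < log 2 := log_pos one_lt_two
  have hterm : ∀ i, (p i - q i) / log 2 ≤ p i * logb 2 (p i / q i) := by
    intro i
    rcases (hp i).eq_or_lt with h0 | h0
    · rw [← h0, zero_mul, zero_sub]
      exact div_nonpos_of_nonpos_of_nonneg (neg_nonpos.2 (hq i)) hlog2.le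
    have hqi : 0 < q i := (hq i).lt_of_ne (hsupp i h0.ne').symm
    rw [logb, mul_div_assoc', div_le_div_iff_of_pos_right hlog2]
    calc p i - q i = p i * (1 - (p i / q i)⁻¹) := by field_simp
      _ ≤ p i * log (p i / q i) :=
        mul_le_mul_of_nonneg_left (one_sub_inv_le_log_of_pos (div_pos h0 hqi)) h0.le
  calc 0 ≤ (∑ i, p i - ∑ i, q i) / log 2 := div_nonneg (by linarith) hlog2.le
    _ = ∑ i, (p i - q i) / log 2 := by rw [← Finset.sum_sub_distrib, Finset.sum_div]
    _ ≤ klDiv p q := Finset.sum_le_sum fun i _ => hterm i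

theorem IsPMF.comp_equiv {α β : Type*} [Fintype α] [Fintype β] {p : α → ℝ} (hp : IsPMF p)
    (e : β ≃ α) : IsPMF (p ∘ e) :=
  ⟨fun b => hp.1 (e b), (e.sum_comp p).trans hp.2⟩

theorem MarkovChain.comp_equiv {α β γ γ' : Type*} [Fintype α] [Fintype γ] [Fintype γ']
    {p : α × β × γ → ℝ} (hp : MarkovChain p) (e : γ' ≃ γ) :
    MarkovChain (fun x : α × β × γ' => p (x.1, x.2.1, e x.2.2)) := by
  intro a b c
  have hsum : ∀ a', ∑ c', p (a', b, e c') = ∑ c', p (a', b, c') :=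
    fun a' => e.sum_comp fun c' => p (a', b, c')
  simp only [hsum]
  exact hp a b (e c)

theorem condEntropy_comp_equiv {α β β' : Type*} [Fintype α] [Fintype β] [Fintype β']
    (p : α × β → ℝ) (e : β' ≃ β) :
    condEntropy (fun x : α × β' => p (x.1, e x.2)) = condEntropy p := by
  simp only [condEntropy, Fintype.sum_prod_type, neg_inj]
  exact Finset.sum_congr rfl fun a _ => Fintype.sum_equiv e _ _ fun _ => rfl

theorem condMI_comp_equiv {α β β' γ : Type*} [Fintype α] [Fintype β] [Fintype β'] [Fintype γ]
    (p : α × β × γ → ℝ) (e : β' ≃ β) :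
    condMI (fun x : α × β' × γ => p (x.1, e x.2.1, x.2.2)) = condMI p := by
  have hsum : ∀ a c, ∑ b, p (a, e b, c) = ∑ b, p (a, b, c) :=
    fun a c => e.sum_comp fun b => p (a, b, c)
  simp only [condMI, Fintype.sum_prod_type, hsum]
  exact Finset.sum_congr rfl fun a _ => Fintype.sum_equiv e _ _ fun _ => rfl

theorem miUW_Z_comp_equiv {Uu V Z Wt Wt' : Type} [Fintype Uu] [Fintype V] [Fintype Z]
    [Fintype Wt] [Fintype Wt'] (J : (Uu × V × Z) × Wt → ℝ) (e : Wt' ≃ Wt) :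
    miUW_Z (fun y => J (y.1, e y.2)) = miUW_Z J :=
  condMI_comp_equiv (fun x : Uu × Wt × Z => ∑ v, J ((x.1, v, x.2.2), x.2.1)) e

theorem entV_WZ_comp_equiv {Uu V Z Wt Wt' : Type} [Fintype Uu] [Fintype V] [Fintype Z]
    [Fintype Wt] [Fintype Wt'] (J : (Uu × V × Z) × Wt → ℝ) (e : Wt' ≃ Wt) :
    entV_WZ (fun y => J (y.1, e y.2)) = entV_WZ J :=
  condEntropy_comp_equiv (fun x : V × (Wt × Z) => ∑ u, J ((u, x.1, x.2.2), x.2.1))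
    (e.prodCongr (Equiv.refl Z))

section Marginals

variable {Uu V Z Wt : Type} [Fintype Uu] [Fintype V] [Fintype Z] [Fintype Wt]
variable (J : (Uu × V × Z) × Wt → ℝ)

def pUWZ (u : Uu) (w : Wt) (z : Z) : ℝ := ∑ v, J ((u, v, z), w)
def pUVZ (u : Uu) (v : V) (z : Z) : ℝ := ∑ w, J ((u, v, z), w)
def pVWZ (v : V) (w : Wt) (z : Z) : ℝ := ∑ u, J ((u, v, z), w)
def pUZ (u : Uu) (z : Z) : ℝ := ∑ w, pUWZ J u w z
def pWZ (w : Wt) (z : Z) : ℝ := ∑ u, pUWZ J u w z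
def pVZ (v : V) (z : Z) : ℝ := ∑ u, pUVZ J u v z
def pZ (z : Z) : ℝ := ∑ u, pUZ J u z
def pU (u : Uu) : ℝ := ∑ z, ∑ v, pUVZ J u v z
def pUW (u : Uu) (w : Wt) : ℝ := ∑ z, pUWZ J u w z

end Marginals

section Support

variable {Uu V Z Wt : Type} {J : (Uu × V × Z) × Wt → ℝ}
variable {u : Uu} {v : V} {z : Z} {w : Wt}

theorem pUZ_eq_sum_pUVZ [Fintype V] [Fintype Wt] (u : Uu) (z : Z) :
    pUZ J u z = ∑ v, pUVZ J u v z :=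
  Finset.sum_comm

theorem pWZ_eq_sum_pVWZ [Fintype Uu] [Fintype V] (w : Wt) (z : Z) :
    pWZ J w z = ∑ v, pVWZ J v w z :=
  Finset.sum_comm

theorem pVZ_eq_sum_pVWZ [Fintype Uu] [Fintype Wt] (v : V) (z : Z) :
    pVZ J v z = ∑ w, pVWZ J v w z :=
  Finset.sum_comm

theorem pZ_eq_sum_pVZ [Fintype Uu] [Fintype V] [Fintype Wt] (z : Z) : pZ J z = ∑ v, pVZ J v z := by
  simp only [pZ, pUZ, pUWZ, pVZ, pUVZ]
  rw [Finset.sum_comm_cycle]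

theorem pUWZ_nonneg [Fintype V] (hp : ∀ x, 0 ≤ J x) (u : Uu) (w : Wt) (z : Z) :
    0 ≤ pUWZ J u w z :=
  Finset.sum_nonneg fun _ _ => hp _

theorem pUVZ_nonneg [Fintype Wt] (hp : ∀ x, 0 ≤ J x) (u : Uu) (v : V) (z : Z) :
    0 ≤ pUVZ J u v z :=
  Finset.sum_nonneg fun _ _ => hp _

theorem pVWZ_nonneg [Fintype Uu] (hp : ∀ x, 0 ≤ J x) (v : V) (w : Wt) (z : Z) :
    0 ≤ pVWZ J v w z :=
  Finset.sum_nonneg fun _ _ => hp _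

theorem pVZ_nonneg [Fintype Uu] [Fintype Wt] (hp : ∀ x, 0 ≤ J x) (v : V) (z : Z) :
    0 ≤ pVZ J v z :=
  Finset.sum_nonneg fun _ _ => pUVZ_nonneg hp _ _ _

theorem pUZ_nonneg [Fintype V] [Fintype Wt] (hp : ∀ x, 0 ≤ J x) (u : Uu) (z : Z) :
    0 ≤ pUZ J u z :=
  Finset.sum_nonneg fun _ _ => pUWZ_nonneg hp _ _ _

theorem pUWZ_pos [Fintype V] (hp : ∀ x, 0 ≤ J x) (hx : 0 < J ((u, v, z), w)) :
    0 < pUWZ J u w z :=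
  Finset.sum_pos' (fun _ _ => hp _) ⟨v, Finset.mem_univ _, hx⟩

theorem pUVZ_pos [Fintype Wt] (hp : ∀ x, 0 ≤ J x) (hx : 0 < J ((u, v, z), w)) :
    0 < pUVZ J u v z :=
  Finset.sum_pos' (fun _ _ => hp _) ⟨w, Finset.mem_univ _, hx⟩

theorem pVWZ_pos [Fintype Uu] (hp : ∀ x, 0 ≤ J x) (hx : 0 < J ((u, v, z), w)) :
    0 < pVWZ J v w z :=
  Finset.sum_pos' (fun _ _ => hp _) ⟨u, Finset.mem_univ _, hx⟩

theorem pUZ_pos [Fintype V] [Fintype Wt] (hp : ∀ x, 0 ≤ J x) (hx : 0 < J ((u, v, z), w)) :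
    0 < pUZ J u z :=
  Finset.sum_pos' (fun _ _ => pUWZ_nonneg hp _ _ _) ⟨w, Finset.mem_univ _, pUWZ_pos hp hx⟩

theorem pWZ_pos [Fintype Uu] [Fintype V] (hp : ∀ x, 0 ≤ J x) (hx : 0 < J ((u, v, z), w)) :
    0 < pWZ J w z :=
  Finset.sum_pos' (fun _ _ => pUWZ_nonneg hp _ _ _) ⟨u, Finset.mem_univ _, pUWZ_pos hp hx⟩

theorem pVZ_pos [Fintype Uu] [Fintype Wt] (hp : ∀ x, 0 ≤ J x) (hx : 0 < J ((u, v, z), w)) :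
    0 < pVZ J v z :=
  Finset.sum_pos' (fun _ _ => pUVZ_nonneg hp _ _ _) ⟨u, Finset.mem_univ _, pUVZ_pos hp hx⟩

theorem pZ_pos [Fintype Uu] [Fintype V] [Fintype Wt] (hp : ∀ x, 0 ≤ J x)
    (hx : 0 < J ((u, v, z), w)) : 0 < pZ J z :=
  Finset.sum_pos' (fun _ _ => pUZ_nonneg hp _ _) ⟨u, Finset.mem_univ _, pUZ_pos hp hx⟩

theorem pU_pos [Fintype V] [Fintype Z] [Fintype Wt] (hp : ∀ x, 0 ≤ J x)
    (hx : 0 < J ((u, v, z), w)) : 0 < pU J u :=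
  Finset.sum_pos' (fun _ _ => Finset.sum_nonneg fun _ _ => pUVZ_nonneg hp _ _ _)
    ⟨z, Finset.mem_univ _,
      Finset.sum_pos' (fun _ _ => pUVZ_nonneg hp _ _ _) ⟨v, Finset.mem_univ _, pUVZ_pos hp hx⟩⟩

end Support

section Markov

variable {Uu V Z Wt : Type} [Fintype V] [Fintype Z] [Fintype Wt] {J : (Uu × V × Z) × Wt → ℝ}

theorem markovZVUW_iff :
    MarkovZVUW J ↔ ∀ u v z w, J ((u, v, z), w) * pU J u = pUVZ J u v z * pUW J u w := by
  constructor
  · intro hM u v z w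
    simpa [Fintype.sum_prod_type, pU, pUVZ, pUW, pUWZ] using hM (z, v) u w
  · intro h a b c
    simpa [Fintype.sum_prod_type, pU, pUVZ, pUW, pUWZ] using h b a.2 a.1 c

theorem MarkovZVUW.pUWZ_mul_pU (hM : MarkovZVUW J) (u : Uu) (w : Wt) (z : Z) :
    pUWZ J u w z * pU J u = pUZ J u z * pUW J u w := by
  have hpt := (markovZVUW_iff.1 hM u · z w)
  rw [pUWZ, Finset.sum_mul, Finset.sum_congr rfl fun v _ => hpt v, ← Finset.sum_mul, pUZ]
  exact congrArg (· * pUW J u w) Finset.sum_comm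

/-- On the support of `J`, the chain `(Z,V) − U − W` also gives `V − (U,Z) − W`. -/
theorem MarkovZVUW.mul_pUZ_eq (hM : MarkovZVUW J) (hp : ∀ x, 0 ≤ J x) {u : Uu} {v : V} {z : Z}
    {w : Wt} (hx : 0 < J ((u, v, z), w)) :
    J ((u, v, z), w) * pUZ J u z = pUWZ J u w z * pUVZ J u v z := by
  have hU : pU J u ≠ 0 := (pU_pos hp hx).ne'
  have h1 := markovZVUW_iff.1 hM u v z w
  have h2 := hM.pUWZ_mul_pU u w z
  refine mul_right_cancel₀ hU ?_
  linear_combination pUZ J u z * h1 - pUVZ J u v z * h2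

end Markov

section SumForms

variable {Uu V Z Wt : Type} [Fintype Uu] [Fintype V] [Fintype Z] [Fintype Wt]
variable (J : (Uu × V × Z) × Wt → ℝ)

theorem sum_pUWZ_mul (g : Uu → Wt → Z → ℝ) :
    ∑ u, ∑ w, ∑ z, pUWZ J u w z * g u w z = ∑ u, ∑ v, ∑ z, ∑ w, J ((u, v, z), w) * g u w z := by
  simp only [pUWZ, Finset.sum_mul]
  refine Finset.sum_congr rfl fun u _ => ?_
  rw [Finset.sum_comm_cycle]
  exact Finset.sum_congr rfl fun v _ => Finset.sum_comm

theorem sum_pVWZ_mul (g : V → Wt → Z → ℝ) :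
    ∑ v, ∑ w, ∑ z, pVWZ J v w z * g v w z = ∑ u, ∑ v, ∑ z, ∑ w, J ((u, v, z), w) * g v w z := by
  simp only [pVWZ, Finset.sum_mul]
  rw [Finset.sum_comm (γ := Uu)]
  refine Finset.sum_congr rfl fun v _ => ?_
  rw [Finset.sum_comm_cycle]
  exact Finset.sum_congr rfl fun u _ => Finset.sum_comm

theorem sum_pVZ_mul (g : V → Z → ℝ) :
    ∑ v, ∑ z, pVZ J v z * g v z = ∑ u, ∑ v, ∑ z, ∑ w, J ((u, v, z), w) * g v z := by
  simp only [pVZ, pUVZ, Finset.sum_mul]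
  rw [Finset.sum_comm (γ := Uu)]
  exact Finset.sum_congr rfl fun v _ => Finset.sum_comm

theorem miUW_Z_eq_sum : miUW_Z J = ∑ u, ∑ v, ∑ z, ∑ w,
    J ((u, v, z), w) * logb 2 (pUWZ J u w z * pZ J z / (pUZ J u z * pWZ J w z)) := by
  rw [← sum_pUWZ_mul]
  change ∑ x : Uu × Wt × Z, pUWZ J x.1 x.2.1 x.2.2 * logb 2 (pUWZ J x.1 x.2.1 x.2.2 *
    pZ J x.2.2 / (pUZ J x.1 x.2.2 * pWZ J x.2.1 x.2.2)) = _
  simp only [Fintype.sum_prod_type]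

theorem entV_WZ_eq_sum : entV_WZ J = -∑ u, ∑ v, ∑ z, ∑ w,
    J ((u, v, z), w) * logb 2 (pVWZ J v w z / pWZ J w z) := by
  rw [← sum_pVWZ_mul]
  simp only [entV_WZ, condEntropy, Fintype.sum_prod_type, pWZ_eq_sum_pVWZ]
  rfl

theorem entV_Z_eq_sum : entV_Z (fun x => ∑ w, J (x, w)) = -∑ u, ∑ v, ∑ z, ∑ w,
    J ((u, v, z), w) * logb 2 (pVZ J v z / pZ J z) := by
  rw [← sum_pVZ_mul]
  simp only [entV_Z, condEntropy, Fintype.sum_prod_type, pZ_eq_sum_pVZ]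
  rfl

end SumForms

section DataProcessing

variable {Uu V Z Wt : Type} [Fintype Uu] [Fintype V] [Fintype Z] [Fintype Wt]
variable (J : (Uu × V × Z) × Wt → ℝ)

/-- The law `P_{UVZ} P_{W|VZ}`, under which `U − (V,Z) − W`; `D(J ‖ markovOverVZ J)` is
`I(U;W|V,Z)`. -/
def markovOverVZ : (Uu × V × Z) × Wt → ℝ :=
  fun ((u, v, z), w) => pUVZ J u v z * pVWZ J v w z / pVZ J v z

theorem sum_markovOverVZ : ∑ x, markovOverVZ J x = ∑ x, J x := by
  have hw : ∀ u v z, ∑ w, markovOverVZ J ((u, v, z), w) = pUVZ J u v z * pVZ J v z / pVZ J v z :=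
    fun u v z => by
      simp only [markovOverVZ, ← Finset.sum_div, ← Finset.mul_sum, ← pVZ_eq_sum_pVWZ]
  have hu : ∀ v z, ∑ u, pUVZ J u v z * pVZ J v z / pVZ J v z = pVZ J v z := fun v z => by
    rw [← Finset.sum_div, ← Finset.sum_mul]
    rcases eq_or_ne (pVZ J v z) 0 with h | h
    · simp [h]
    · exact mul_div_cancel_right₀ _ h
  have hJ := sum_pVZ_mul J fun _ _ => 1
  simp only [mul_one] at hJ
  simp only [Fintype.sum_prod_type, hw, ← hJ]
  rw [Finset.sum_comm]
  refine Finset.sum_congr rfl fun v _ => ?_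
  rw [Finset.sum_comm]
  exact Finset.sum_congr rfl fun z _ => hu v z

variable {J}

theorem mul_logb_div_markovOverVZ (hp : ∀ x, 0 ≤ J x) (hM : MarkovZVUW J) (u : Uu) (v : V)
    (z : Z) (w : Wt) :
    J ((u, v, z), w) * logb 2 (J ((u, v, z), w) / markovOverVZ J ((u, v, z), w)) =
      J ((u, v, z), w) * logb 2 (pUWZ J u w z * pZ J z / (pUZ J u z * pWZ J w z)) -
        J ((u, v, z), w) * logb 2 (pVWZ J v w z / pWZ J w z) +
        J ((u, v, z), w) * logb 2 (pVZ J v z / pZ J z) := by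
  rcases (hp ((u, v, z), w)).eq_or_lt with h0 | hx
  · simp [← h0]
  have hUWZ := (pUWZ_pos hp hx).ne'
  have hUVZ := (pUVZ_pos hp hx).ne'
  have hVWZ := (pVWZ_pos hp hx).ne'
  have hUZ := (pUZ_pos hp hx).ne'
  have hWZ := (pWZ_pos hp hx).ne'
  have hVZ := (pVZ_pos hp hx).ne'
  have hZ := (pZ_pos hp hx).ne'
  have hratio : J ((u, v, z), w) / markovOverVZ J ((u, v, z), w) =
      pUWZ J u w z * pZ J z / (pUZ J u z * pWZ J w z) / (pVWZ J v w z / pWZ J w z) *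
        (pVZ J v z / pZ J z) := by
    simp only [markovOverVZ]
    field_simp
    linear_combination hM.mul_pUZ_eq hp hx
  rw [hratio, logb_mul (by positivity) (by positivity), logb_div (by positivity) (by positivity)]
  ring

theorem klDiv_markovOverVZ (hp : ∀ x, 0 ≤ J x) (hM : MarkovZVUW J) :
    klDiv J (markovOverVZ J) = miUW_Z J + entV_WZ J - entV_Z (fun x => ∑ w, J (x, w)) := by
  simp only [klDiv, miUW_Z_eq_sum, entV_WZ_eq_sum, entV_Z_eq_sum, Fintype.sum_prod_type,
    mul_logb_div_markovOverVZ hp hM, Finset.sum_add_distrib, Finset.sum_sub_distrib]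
  ring

theorem entV_Z_le_entV_WZ_add_miUW_Z (hp : ∀ x, 0 ≤ J x) (hM : MarkovZVUW J) :
    entV_Z (fun x => ∑ w, J (x, w)) ≤ entV_WZ J + miUW_Z J := by
  have hq : ∀ x, 0 ≤ markovOverVZ J x := fun ((u, v, z), w) =>
    div_nonneg (mul_nonneg (pUVZ_nonneg hp u v z) (pVWZ_nonneg hp v w z)) (pVZ_nonneg hp v z)
  have hsupp : ∀ x, J x ≠ 0 → markovOverVZ J x ≠ 0 := fun ((u, v, z), w) hx =>
    have hx := (hp _).lt_of_ne' hx
    (div_pos (mul_pos (pUVZ_pos hp hx) (pVWZ_pos hp hx)) (pVZ_pos hp hx)).ne'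
  have := klDiv_nonneg hp hq (sum_markovOverVZ J).le hsupp
  rw [klDiv_markovOverVZ hp hM] at this
  linarith

end DataProcessing

section TimeSharing

variable {Uu V Z Wt : Type}

section

variable (J : (Uu × V × Z) × Wt → ℝ) (l : ℝ)

def timeShare [Fintype Wt] : (Uu × V × Z) × Option Wt → ℝ
  | (x, none) => (1 - l) * ∑ w, J (x, w)
  | (x, some w) => l * J (x, w)

theorem sum_timeShare [Fintype Wt] (x : Uu × V × Z) :
    ∑ o, timeShare J l (x, o) = ∑ w, J (x, w) := by
  simp only [Fintype.sum_option, timeShare, ← Finset.mul_sum]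
  ring

variable (u : Uu) (v : V) (w : Wt) (z : Z)

theorem pUVZ_timeShare [Fintype Wt] : pUVZ (timeShare J l) u v z = pUVZ J u v z :=
  sum_timeShare J l _

theorem pU_timeShare [Fintype V] [Fintype Z] [Fintype Wt] :
    pU (timeShare J l) u = pU J u := by
  simp only [pU, pUVZ_timeShare]

theorem pUZ_timeShare [Fintype V] [Fintype Wt] : pUZ (timeShare J l) u z = pUZ J u z := by
  simp only [pUZ_eq_sum_pUVZ, pUVZ_timeShare]

theorem pZ_timeShare [Fintype Uu] [Fintype V] [Fintype Wt] : pZ (timeShare J l) z = pZ J z := by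
  simp only [pZ, pUZ_timeShare]

theorem pUWZ_timeShare_some [Fintype V] [Fintype Wt] :
    pUWZ (timeShare J l) u (some w) z = l * pUWZ J u w z :=
  (Finset.mul_sum ..).symm

theorem pUWZ_timeShare_none [Fintype V] [Fintype Wt] :
    pUWZ (timeShare J l) u none z = (1 - l) * pUZ J u z := by
  rw [pUZ_eq_sum_pUVZ, Finset.mul_sum]
  rfl

theorem pWZ_timeShare_some [Fintype Uu] [Fintype V] [Fintype Wt] :
    pWZ (timeShare J l) (some w) z = l * pWZ J w z := by
  simp only [pWZ, pUWZ_timeShare_some, ← Finset.mul_sum]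

theorem pWZ_timeShare_none [Fintype Uu] [Fintype V] [Fintype Wt] :
    pWZ (timeShare J l) none z = (1 - l) * pZ J z := by
  simp only [pWZ, pUWZ_timeShare_none, ← Finset.mul_sum]
  rfl

theorem pVWZ_timeShare_some [Fintype Uu] [Fintype Wt] :
    pVWZ (timeShare J l) v (some w) z = l * pVWZ J v w z :=
  (Finset.mul_sum ..).symm

theorem pVWZ_timeShare_none [Fintype Uu] [Fintype Wt] :
    pVWZ (timeShare J l) v none z = (1 - l) * pVZ J v z :=
  (Finset.mul_sum ..).symm

theorem pUW_timeShare_some [Fintype V] [Fintype Z] [Fintype Wt] :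
    pUW (timeShare J l) u (some w) = l * pUW J u w := by
  simp only [pUW, pUWZ_timeShare_some, ← Finset.mul_sum]

theorem pUW_timeShare_none [Fintype V] [Fintype Z] [Fintype Wt] :
    pUW (timeShare J l) u none = (1 - l) * pU J u := by
  simp only [pUW, pUWZ_timeShare_none, ← Finset.mul_sum, pU, pUZ_eq_sum_pUVZ]

end

theorem MarkovZVUW.timeShare [Fintype V] [Fintype Z] [Fintype Wt]
    {J : (Uu × V × Z) × Wt → ℝ} (hM : MarkovZVUW J) (l : ℝ) :
    MarkovZVUW (timeShare J l) := by
  rw [markovZVUW_iff] at hM ⊢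
  rintro u v z (_ | w)
  · rw [pU_timeShare, pUVZ_timeShare, pUW_timeShare_none]
    change (1 - l) * pUVZ J u v z * pU J u = _
    ring
  · rw [pU_timeShare, pUVZ_timeShare, pUW_timeShare_some]
    change l * J ((u, v, z), w) * pU J u = _
    linear_combination l * hM u v z w

variable [Fintype Uu] [Fintype V] [Fintype Z] [Fintype Wt]
variable {J : (Uu × V × Z) × Wt → ℝ} {l : ℝ}

theorem IsPMF.timeShare (hJ : IsPMF J) (hl0 : 0 ≤ l) (hl1 : l ≤ 1) :
    IsPMF (timeShare J l) := by
  refine ⟨fun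
    | (x, none) => mul_nonneg (sub_nonneg.2 hl1) (Finset.sum_nonneg fun _ _ => hJ.1 _)
    | (x, some w) => mul_nonneg hl0 (hJ.1 _), ?_⟩
  rw [Fintype.sum_prod_type]
  simp only [sum_timeShare]
  rw [← Fintype.sum_prod_type]
  exact hJ.2

variable (J l)

theorem miUW_Z_timeShare : miUW_Z (timeShare J l) = l * miUW_Z J := by
  have hnone : ∀ u v z, timeShare J l ((u, v, z), none) *
      logb 2 (pUWZ (timeShare J l) u none z * pZ (timeShare J l) z /
        (pUZ (timeShare J l) u z * pWZ (timeShare J l) none z)) = 0 := by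
    intro u v z
    rw [pUWZ_timeShare_none, pZ_timeShare, pUZ_timeShare, pWZ_timeShare_none,
      show pUZ J u z * ((1 - l) * pZ J z) = (1 - l) * pUZ J u z * pZ J z by ring]
    rcases eq_or_ne ((1 - l) * pUZ J u z * pZ J z) 0 with h | h <;> simp [h]
  have hsome : ∀ u v z w, timeShare J l ((u, v, z), some w) *
      logb 2 (pUWZ (timeShare J l) u (some w) z * pZ (timeShare J l) z /
        (pUZ (timeShare J l) u z * pWZ (timeShare J l) (some w) z)) =
      l * (J ((u, v, z), w) *
        logb 2 (pUWZ J u w z * pZ J z / (pUZ J u z * pWZ J w z))) := by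
    intro u v z w
    rw [pUWZ_timeShare_some, pZ_timeShare, pUZ_timeShare, pWZ_timeShare_some]
    rcases eq_or_ne l 0 with rfl | hl
    · simp [timeShare]
    · rw [mul_assoc l, mul_left_comm (pUZ J u z) l, mul_div_mul_left _ _ hl]
      simp only [timeShare]
      ring
  simp only [miUW_Z_eq_sum, Fintype.sum_option, hnone, hsome, zero_add, Finset.mul_sum]

theorem entV_WZ_timeShare :
    entV_WZ (timeShare J l) = l * entV_WZ J + (1 - l) * entV_Z (fun x => ∑ w, J (x, w)) := by
  have hnone : ∀ u v z, timeShare J l ((u, v, z), none) *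
      logb 2 (pVWZ (timeShare J l) v none z / pWZ (timeShare J l) none z) =
      (1 - l) * ∑ w, J ((u, v, z), w) * logb 2 (pVZ J v z / pZ J z) := by
    intro u v z
    rw [pVWZ_timeShare_none, pWZ_timeShare_none, ← Finset.sum_mul]
    rcases eq_or_ne l 1 with rfl | hl
    · simp [timeShare]
    · rw [mul_div_mul_left _ _ (sub_ne_zero.2 hl.symm)]
      simp only [timeShare]
      ring
  have hsome : ∀ u v z w, timeShare J l ((u, v, z), some w) *
      logb 2 (pVWZ (timeShare J l) v (some w) z / pWZ (timeShare J l) (some w) z) =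
      l * (J ((u, v, z), w) * logb 2 (pVWZ J v w z / pWZ J w z)) := by
    intro u v z w
    rw [pVWZ_timeShare_some, pWZ_timeShare_some]
    rcases eq_or_ne l 0 with rfl | hl
    · simp [timeShare]
    · rw [mul_div_mul_left _ _ hl]
      simp only [timeShare]
      ring
  simp only [entV_WZ_eq_sum, entV_Z_eq_sum, Fintype.sum_option, hnone, hsome,
    Finset.sum_add_distrib, ← Finset.mul_sum]
  ring

end TimeSharing

end DHT

/-- If `(Z,V) − U − W` is a Markov chain and `c ≥ 0` satisfies
`I(U;W|Z) > c`, then there is a finite `W̄` (with the same `(U,V,Z)`-marginal) such that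
`(Z,V) − U − W̄` is a Markov chain, `I(U;W̄|Z) = c` and
`H(V|W̄,Z) ≤ H(V|W,Z) + I(U;W|Z) − c`. -/
theorem statement_15 {Uu V Z Wt : Type}
    [Fintype Uu] [Fintype V] [Fintype Z] [Fintype Wt]
    (J : (Uu × V × Z) × Wt → ℝ) (hJ : IsPMF J) (hM : MarkovZVUW J)
    (c : ℝ) (hc : 0 ≤ c) (hgt : c < miUW_Z J) :
    ∃ (nw : ℕ) (J' : (Uu × V × Z) × Fin nw → ℝ),
      IsPMF J' ∧ (∀ x, (∑ w, J' (x, w)) = ∑ w, J (x, w)) ∧ MarkovZVUW J' ∧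
      miUW_Z J' = c ∧ entV_WZ J' ≤ entV_WZ J + miUW_Z J - c := by
  have hI : 0 < miUW_Z J := hc.trans_lt hgt
  set l := c / miUW_Z J
  have hl0 : 0 ≤ l := div_nonneg hc hI.le
  have hl1 : l ≤ 1 := (div_le_one hI).2 hgt.le
  have hlI : l * miUW_Z J = c := div_mul_cancel₀ c hI.ne'
  have hdpi := entV_Z_le_entV_WZ_add_miUW_Z hJ.1 hM
  let e := (Fintype.equivFin (Option Wt)).symm
  refine ⟨_, fun y => timeShare J l (y.1, e y.2),
    (hJ.timeShare hl0 hl1).comp_equiv ((Equiv.refl _).prodCongr e),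
    fun x => (e.sum_comp fun o => timeShare J l (x, o)).trans (sum_timeShare J l x),
    (hM.timeShare l).comp_equiv e, ?_, ?_⟩
  · rw [miUW_Z_comp_equiv _ e, miUW_Z_timeShare, hlI]
  · rw [entV_WZ_comp_equiv _ e, entV_WZ_timeShare]
    linarith [mul_le_mul_of_nonneg_left hdpi (sub_nonneg.2 hl1)]
end
end
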